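/- Let F : ℝ → ℝ be continuous and positive on [r_-, ∞) with r_- < r_+, and suppose there exists a differentiable strictly increasing function ρ : [r_-, ∞) → ℝ satisfying F(r)(r - r_+)(r - r_-) ρ'(r) = (ρ(r) - ρ_+)(ρ(r) - ρ_-) for all r, where ρ_± = ρ(r_±). Then F(r_+) = F(r_-) = (ρ_+ - ρ_-)/(r_+ - r_-). -/

import Mathlib

/-!
Write the relation near a horizon `a` (the other one being `o`) as
`F r (r - o) ρ'(r) = (ρ r - ρ a)/(r - a) · (ρ r - ρ o)`. As `r ↓ a` the right side tends to
`ρ'(a) (ρ a - ρ o)`, so `ρ'(r)` has a limit from the right; by the derivative limit theorem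
that limit is `ρ'(a)`, and cancelling `ρ'(a) ≠ 0` gives `F a (a - o) = ρ a - ρ o`.
-/

open Set Filter Topology

theorem deriv_eq_of_tendsto_deriv_nhdsGT {E : Type*} [NormedAddCommGroup E] [NormedSpace ℝ E]
    {f : ℝ → E} {a : ℝ} {e : E} (ha : DifferentiableAt ℝ f a)
    (hdiff : ∀ᶠ x in 𝓝[>] a, DifferentiableAt ℝ f x)
    (hlim : Tendsto (deriv f) (𝓝[>] a) (𝓝 e)) : deriv f a = e :=
  (uniqueDiffOn_Ici a a self_mem_Ici).eq_deriv _ ha.hasDerivAt.hasDerivWithinAt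
    (hasDerivWithinAt_Ici_of_tendsto_deriv (s := {x | DifferentiableAt ℝ f x})
      (fun _ hx => hx.differentiableWithinAt) ha.continuousAt.continuousWithinAt hdiff hlim)

theorem HasDerivAt.tendsto_slope_nhdsGT {f : ℝ → ℝ} {a f' : ℝ} (h : HasDerivAt f f' a) :
    Tendsto (fun r => (f r - f a) / (r - a)) (𝓝[>] a) (𝓝 f') :=
  (h.tendsto_slope.mono_left (nhdsGT_le_nhdsNE a)).congr fun r => slope_def_field f a r

theorem mul_sub_eq_of_ode_at_root {F ρ : ℝ → ℝ} {a o : ℝ} (hao : a ≠ o)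
    (hF : ContinuousWithinAt F (Ioi a) a) (hFa : F a ≠ 0) (hρ' : deriv ρ a ≠ 0)
    (hdiff : ∀ᶠ r in 𝓝[>] a, DifferentiableAt ℝ ρ r)
    (hode : ∀ᶠ r in 𝓝[>] a,
      F r * (r - a) * (r - o) * deriv ρ r = (ρ r - ρ a) * (ρ r - ρ o)) :
    F a * (a - o) = ρ a - ρ o := by
  have hρ : DifferentiableAt ℝ ρ a := differentiableAt_of_deriv_ne_zero hρ'
  have hc : F a * (a - o) ≠ 0 := mul_ne_zero hFa (sub_ne_zero.2 hao)
  have hcoef : Tendsto (fun r => F r * (r - o)) (𝓝[>] a) (𝓝 (F a * (a - o))) :=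
    hF.tendsto.mul (tendsto_nhdsWithin_of_tendsto_nhds (tendsto_id.sub_const o))
  have hρo : Tendsto (fun r => ρ r - ρ o) (𝓝[>] a) (𝓝 (ρ a - ρ o)) :=
    tendsto_nhdsWithin_of_tendsto_nhds (hρ.continuousAt.tendsto.sub_const _)
  have hderiv : (fun r => (ρ r - ρ a) / (r - a) * (ρ r - ρ o) / (F r * (r - o)))
      =ᶠ[𝓝[>] a] deriv ρ := by
    filter_upwards [hode, self_mem_nhdsWithin, hcoef.eventually_ne hc] with r hr hra hne
    obtain ⟨hFr, hro⟩ := mul_ne_zero_iff.1 hne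
    have hra' : r - a ≠ 0 := sub_ne_zero.2 (ne_of_gt hra)
    field_simp
    linear_combination -hr
  have hlim : deriv ρ a = deriv ρ a * (ρ a - ρ o) / (F a * (a - o)) :=
    deriv_eq_of_tendsto_deriv_nhdsGT hρ hdiff
      (((hρ.hasDerivAt.tendsto_slope_nhdsGT.mul hρo).div hcoef hc).congr' hderiv)
  rw [eq_div_iff hc] at hlim
  exact mul_left_cancel₀ hρ' (by linear_combination hlim)

theorem stmt_16_general (F ρ : ℝ → ℝ) (rm rp : ℝ) (hr : rm < rp)
    (hFcont : ContinuousOn F (Set.Ici rm))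
    (hFpos : ∀ r ∈ Set.Ici rm, 0 < F r)
    (hρdiff : ∀ r ∈ Set.Ici rm, DifferentiableAt ℝ ρ r)
    (hρ'p : 0 < deriv ρ rp) (hρ'm : 0 < deriv ρ rm)
    (hODE : ∀ r ∈ Set.Ici rm,
      F r * (r - rp) * (r - rm) * deriv ρ r = (ρ r - ρ rp) * (ρ r - ρ rm)) :
    F rp = (ρ rp - ρ rm) / (rp - rm) ∧ F rm = (ρ rp - ρ rm) / (rp - rm) := by
  have hnear : ∀ a ∈ Ici rm, ∀ᶠ r in 𝓝[>] a, r ∈ Ici rm := fun a ha =>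
    mem_of_superset self_mem_nhdsWithin fun r hr => mem_Ici.2 (ha.trans (le_of_lt hr))
  have hcont : ∀ a ∈ Ici rm, ContinuousWithinAt F (Ioi a) a := fun a ha =>
    (hFcont a ha).mono fun r hr => mem_Ici.2 (mem_Ici.1 ha |>.trans (le_of_lt hr))
  have hp : rp ∈ Ici rm := hr.le
  have hm : rm ∈ Ici rm := self_mem_Ici
  have hFp := mul_sub_eq_of_ode_at_root hr.ne' (hcont rp hp) (hFpos rp hp).ne' hρ'p.ne'
    ((hnear rp hp).mono hρdiff) ((hnear rp hp).mono hODE)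
  have hFm := mul_sub_eq_of_ode_at_root hr.ne (hcont rm hm) (hFpos rm hm).ne' hρ'm.ne'
    ((hnear rm hm).mono hρdiff) ((hnear rm hm).mono fun r hr => by
      linear_combination hODE r hr)
  have hpm : rp - rm ≠ 0 := sub_ne_zero.2 hr.ne'
  exact ⟨(eq_div_iff hpm).2 hFp, (eq_div_iff hpm).2 (by linear_combination -hFm)⟩

/-- If a strictly increasing differentiable conformal coordinate ρ satisfies
F(r)(r-r₊)(r-r₋)ρ'(r) = (ρ(r)-ρ₊)(ρ(r)-ρ₋), then
F(r₊) = F(r₋) = (ρ₊-ρ₋)/(r₊-r₋). -/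
theorem stmt_16 (F ρ : ℝ → ℝ) (rm rp : ℝ) (hr : rm < rp)
    (hFcont : ContinuousOn F (Set.Ici rm))
    (hFpos : ∀ r ∈ Set.Ici rm, 0 < F r)
    (hρdiff : ∀ r ∈ Set.Ici rm, DifferentiableAt ℝ ρ r)
    (hρmono : StrictMonoOn ρ (Set.Ici rm))
    (hρ'p : 0 < deriv ρ rp) (hρ'm : 0 < deriv ρ rm)
    (hODE : ∀ r ∈ Set.Ici rm,
      F r * (r - rp) * (r - rm) * deriv ρ r = (ρ r - ρ rp) * (ρ r - ρ rm)) :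
    F rp = (ρ rp - ρ rm) / (rp - rm) ∧ F rm = (ρ rp - ρ rm) / (rp - rm) :=
  stmt_16_general F ρ rm rp hr hFcont hFpos hρdiff hρ'p hρ'm hODE
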